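/- Let $M = \begin{pmatrix} A & B \\ C & D \end{pmatrix}$ be the block form of an $N\times N$ Manin matrix with entries in an associative algebra $\mathcal{A}$, and suppose $\mathcal{A}$ embeds in a larger algebra $\mathcal{A}''$ in which the block $D$ has a right inverse $D^{-1}$. Then $\mathrm{cdet}\, M = \mathrm{cdet}(D)\cdot\mathrm{cdet}(A - B D^{-1} C)$, as an identity in $\mathcal{A}$. -/

import Mathlib

def cdet {A : Type*} [Ring A] {n : ℕ} (M : Matrix (Fin n) (Fin n) A) : A :=
  ∑ σ : Equiv.Perm (Fin n), ((Equiv.Perm.sign σ : ℤ) • (List.ofFn fun j => M (σ j) j).prod)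

def IsManin {A : Type*} [Ring A] {m n : Type*} (M : Matrix m n A) : Prop :=
  (∀ i k j, Commute (M i j) (M k j)) ∧
  (∀ i k j l, M i j * M k l - M k l * M i j = M k j * M i l - M i l * M k j)

/-!
Conjugating by `finAddFlip`, which exchanges the two blocks and preserves `cdet` of a Manin
matrix, moves `D` to the top-left corner. Right multiplication by the unitriangular
`[[1, -D⁻¹ C], [0, 1]]` then gives the block lower triangular `[[D, 0], [B, A - B D⁻¹ C]]`, whose
`cdet` is `cdet D * cdet (A - B D⁻¹ C)` in this order because the columns of `D` come first.

The heart of the matter is that right multiplication by an upper unitriangular `U` preserves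
`cdet M` for Manin `M`. Expanding the column-ordered products of `M * U` gives one sum for each
choice `c` of columns of `M`, with entries of `U` interleaved between the factors. Only `c = id`
survives: otherwise either an entry of `U` below the diagonal occurs, or the first `j` with
`c j ≠ j` has `c j < j`, so column `c j` occurs twice among the first `j + 1` factors, where all
interleaved entries of `U` are `1`. There, adjacent transpositions of columns only change the sign
(Manin relations), and once the two copies are adjacent the sum vanishes (entries of a column
commute).
-/

open Equiv Equiv.Perm Finset

theorem Equiv.Perm.sum_eq_zero_of_add_mul_swap {α β : Type*} [DecidableEq α] [Fintype α]
    [AddCommMonoid β] {f : Perm α → β} {a b : α} (hab : a ≠ b)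
    (hf : ∀ σ, f σ + f (σ * swap a b) = 0) : ∑ σ, f σ = 0 :=
  sum_ninvolution (· * swap a b) hf (fun σ _ => by simpa [mul_eq_left, swap_eq_one_iff] using hab)
    (fun _ => mem_univ _) (fun σ => by simp [mul_assoc])

theorem List.prod_ofFn_eq_of_eqOn_adjacent {M : Type*} [Monoid M] {n : ℕ} {g g' : Fin n → M}
    {a b : Fin n} (hab : (b : ℕ) = a + 1) (h : ∀ t, t ≠ a → t ≠ b → g' t = g t) :
    (List.ofFn g').prod =
      ((List.ofFn g).take a).prod * (g' a * g' b) * ((List.ofFn g).drop (a + 2)).prod := by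
  have hout : ∀ t : Fin n, (t : ℕ) < a ∨ (a : ℕ) + 2 ≤ t → g' t = g t := fun t ht =>
    h t (fun e => by subst e; omega) (fun e => by subst e; omega)
  have htake : (List.ofFn g').take a = (List.ofFn g).take a :=
    List.ext_getElem (by simp) fun m h₁ _ => by
      simp only [List.length_take, List.length_ofFn, lt_min_iff] at h₁
      simpa using hout _ (.inl h₁.1)
  have hdrop : (List.ofFn g').drop (a + 2) = (List.ofFn g).drop (a + 2) :=
    List.ext_getElem (by simp) fun m _ _ => by simpa using hout _ (.inr (by simp))
  have ha : (a : ℕ) < (List.ofFn g').length := by simp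
  have hb : (a : ℕ) + 1 < (List.ofFn g').length := by simp; omega
  conv_lhs => rw [← List.take_append_drop a (List.ofFn g'), List.drop_eq_getElem_cons ha,
    List.drop_eq_getElem_cons hb]
  simp only [htake, hdrop, List.prod_append, List.prod_cons, List.getElem_ofFn, mul_assoc]
  congr 4
  exact Fin.ext hab.symm

theorem List.prod_ofFn_sum {R ι : Type*} [Semiring R] [Fintype ι] {m : ℕ} (f : Fin m → ι → R) :
    (List.ofFn fun t => ∑ i, f t i).prod =
      ∑ g : Fin m → ι, (List.ofFn fun t => f t (g t)).prod := by
  induction m with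
  | zero => simp
  | succ m ih =>
    rw [List.ofFn_succ, List.prod_cons, ih, sum_mul_sum,
      ← (Fin.consEquiv fun _ => ι).sum_comp, Fintype.sum_prod_type]
    simp [List.ofFn_succ, Fin.consEquiv]

def Matrix.fromBlocksFin {α : Type*} {k l : ℕ} (A : Matrix (Fin k) (Fin k) α)
    (B : Matrix (Fin k) (Fin l) α) (C : Matrix (Fin l) (Fin k) α) (D : Matrix (Fin l) (Fin l) α) :
    Matrix (Fin (k + l)) (Fin (k + l)) α :=
  (Matrix.fromBlocks A B C D).submatrix finSumFinEquiv.symm finSumFinEquiv.symm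

namespace Matrix

variable {α β : Type*} {k l : ℕ}

theorem fromBlocksFin_map (A : Matrix (Fin k) (Fin k) α) (B : Matrix (Fin k) (Fin l) α)
    (C : Matrix (Fin l) (Fin k) α) (D : Matrix (Fin l) (Fin l) α) (f : α → β) :
    (fromBlocksFin A B C D).map f = fromBlocksFin (A.map f) (B.map f) (C.map f) (D.map f) := by
  rw [fromBlocksFin, ← submatrix_map, fromBlocks_map]
  rfl

theorem fromBlocksFin_submatrix_finAddFlip (A : Matrix (Fin k) (Fin k) α)
    (B : Matrix (Fin k) (Fin l) α) (C : Matrix (Fin l) (Fin k) α) (D : Matrix (Fin l) (Fin l) α) :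
    (fromBlocksFin A B C D).submatrix finAddFlip finAddFlip = fromBlocksFin D C B A := by
  ext i j
  simp only [fromBlocksFin, finAddFlip, submatrix_apply, trans_apply, symm_apply_apply]
  rcases finSumFinEquiv.symm i with a | a <;> rcases finSumFinEquiv.symm j with b | b <;> rfl

theorem fromBlocksFin_mul [NonUnitalNonAssocSemiring α] (A A' : Matrix (Fin k) (Fin k) α)
    (B B' : Matrix (Fin k) (Fin l) α) (C C' : Matrix (Fin l) (Fin k) α)
    (D D' : Matrix (Fin l) (Fin l) α) :
    fromBlocksFin A B C D * fromBlocksFin A' B' C' D' =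
      fromBlocksFin (A * A' + B * C') (A * B' + B * D') (C * A' + D * C') (C * B' + D * D') := by
  rw [fromBlocksFin, fromBlocksFin, submatrix_mul_equiv, fromBlocks_multiply]
  rfl

theorem blockTriangular_fromBlocksFin [Zero α] {A : Matrix (Fin k) (Fin k) α}
    (B : Matrix (Fin k) (Fin l) α) {D : Matrix (Fin l) (Fin l) α} (hA : A.BlockTriangular id)
    (hD : D.BlockTriangular id) : (fromBlocksFin A B 0 D).BlockTriangular id := by
  intro i j hji
  induction i using Fin.addCases <;> induction j using Fin.addCases <;>
    simp_all only [fromBlocksFin, submatrix_apply, finSumFinEquiv_symm_apply_castAdd,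
      finSumFinEquiv_symm_apply_natAdd, fromBlocks_apply₁₁, fromBlocks_apply₁₂, fromBlocks_apply₂₁,
      fromBlocks_apply₂₂, zero_apply]
  · exact hA (Fin.lt_def.2 (Fin.lt_def.1 hji))
  · have := Fin.lt_def.1 hji
    simp at this
    omega
  · exact hD (Fin.lt_def.2 (by simpa using Fin.lt_def.1 hji))

theorem fromBlocksFin_apply_self [Zero α] [One α] {A : Matrix (Fin k) (Fin k) α}
    (B : Matrix (Fin k) (Fin l) α) {D : Matrix (Fin l) (Fin l) α} (hA : ∀ i, A i i = 1)
    (hD : ∀ i, D i i = 1) (i : Fin (k + l)) : fromBlocksFin A B 0 D i i = 1 := by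
  induction i using Fin.addCases <;> simp [fromBlocksFin, hA, hD]

end Matrix

section Cdet

variable {R S : Type*} [Ring R] [Ring S]

theorem IsManin.submatrix {m n m' n' : Type*} {M : Matrix m n R} (hM : IsManin M)
    (r : m' → m) (c : n' → n) : IsManin (M.submatrix r c) :=
  ⟨fun _ _ _ => hM.1 _ _ _, fun _ _ _ _ => hM.2 _ _ _ _⟩

theorem IsManin.map {m n : Type*} {M : Matrix m n R} (hM : IsManin M) (f : R →+* S) :
    IsManin (M.map f) :=
  ⟨fun i k j => (hM.1 i k j).map f, fun i k j l => by simpa using congrArg f (hM.2 i k j l)⟩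

theorem cdet_map {n : ℕ} (f : R →+* S) (M : Matrix (Fin n) (Fin n) R) :
    cdet (M.map f) = f (cdet M) := by
  simp [cdet, map_list_prod, List.map_ofFn, Function.comp_def]

/-- The summand indexed by `c` in the expansion of `cdet (M * U)`, with `u t = U (c t) t`. -/
def decoratedCdet {n : ℕ} (M : Matrix (Fin n) (Fin n) R) (c : Fin n → Fin n) (u : Fin n → R) :
    R :=
  ∑ σ : Perm (Fin n), (sign σ : ℤ) • (List.ofFn fun t => M (σ t) (c t) * u t).prod

variable {n : ℕ} {M : Matrix (Fin n) (Fin n) R} {c : Fin n → Fin n} {u : Fin n → R}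

theorem cdet_submatrix_id_eq_decoratedCdet (M : Matrix (Fin n) (Fin n) R) (c : Fin n → Fin n) :
    cdet (M.submatrix id c) = decoratedCdet M c 1 := by
  simp [cdet, decoratedCdet]

theorem decoratedCdet_comp_swap_of_adjacent (hM : IsManin M) {a b : Fin n}
    (hab : (b : ℕ) = a + 1) (ha : u a = 1) (hb : u b = 1) :
    decoratedCdet M (c ∘ swap a b) u = -decoratedCdet M c u := by
  have hne : a ≠ b := fun h => by simp [h] at hab
  rw [eq_neg_iff_add_eq_zero, decoratedCdet, decoratedCdet, ← sum_add_distrib]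
  refine sum_eq_zero_of_add_mul_swap hne fun σ => ?_
  simp (disch := intro t hta htb; simp [swap_apply_of_ne_of_ne hta htb]) only
    [List.prod_ofFn_eq_of_eqOn_adjacent (g := fun t => M (σ t) (c t) * u t) hab]
  simp only [Function.comp, Perm.mul_apply, swap_apply_left, swap_apply_right, ha, hb, mul_one,
    Perm.sign_mul, sign_swap hne, Units.val_neg, mul_neg]
  have key : M (σ a) (c b) * M (σ b) (c a) + M (σ a) (c a) * M (σ b) (c b) =
      M (σ b) (c b) * M (σ a) (c a) + M (σ b) (c a) * M (σ a) (c b) := by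
    rw [← sub_eq_zero, ← sub_eq_zero.mpr (hM.2 (σ a) (σ b) (c a) (c b))]
    abel
  rw [neg_smul, neg_smul, ← neg_add, ← smul_add, ← smul_add, ← add_mul, ← add_mul, ← mul_add,
    ← mul_add, key, add_neg_cancel]

theorem decoratedCdet_eq_zero_of_adjacent (hM : IsManin M) {a b : Fin n}
    (hab : (b : ℕ) = a + 1) (hc : c a = c b) (ha : u a = 1) : decoratedCdet M c u = 0 := by
  have hne : a ≠ b := fun h => by simp [h] at hab
  refine sum_eq_zero_of_add_mul_swap hne fun σ => ?_
  simp (disch := intro t hta htb; simp [swap_apply_of_ne_of_ne hta htb]) only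
    [List.prod_ofFn_eq_of_eqOn_adjacent (g := fun t => M (σ t) (c t) * u t) hab]
  simp only [Perm.mul_apply, swap_apply_left, swap_apply_right, ha, mul_one, Perm.sign_mul,
    sign_swap hne, Units.val_neg, mul_neg, neg_smul, ← mul_assoc, hc,
    (hM.1 (σ a) (σ b) (c b)).eq, add_neg_cancel]

theorem decoratedCdet_comp_swap (hM : IsManin M) {a b : Fin n} (hab : a < b)
    (hu : ∀ t, a ≤ t → t ≤ b → u t = 1) :
    decoratedCdet M (c ∘ swap a b) u = -decoratedCdet M c u := by
  obtain ⟨d, hd⟩ : ∃ d, (b : ℕ) = a + d + 1 := ⟨b - a - 1, by omega⟩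
  induction d generalizing a c with
  | zero =>
    exact decoratedCdet_comp_swap_of_adjacent hM hd (hu a le_rfl hab.le) (hu b hab.le le_rfl)
  | succ d ih =>
    set a' : Fin n := ⟨a + 1, by omega⟩
    have haa' : (a' : ℕ) = a + 1 := rfl
    have hconj : swap a b = swap a' a * swap b a' * swap a' a :=
      (swap_mul_swap_mul_swap (x := b) (by simp [Fin.ext_iff]; omega)
        (by simp [Fin.ext_iff]; omega)).symm
    have ha_le : a ≤ a' := Fin.le_def.2 (by omega)
    have ha'_lt : a' < b := Fin.lt_def.2 (by omega)
    have hu' : ∀ t, a' ≤ t → t ≤ b → u t = 1 := fun t h₁ h₂ => hu t (ha_le.trans h₁) h₂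
    have hua : u a = 1 := hu a le_rfl hab.le
    have hua' : u a' = 1 := hu a' ha_le ha'_lt.le
    rw [hconj, Equiv.swap_comm a' a, Equiv.swap_comm b a', Perm.coe_mul, Perm.coe_mul,
      ← Function.comp_assoc, ← Function.comp_assoc,
      decoratedCdet_comp_swap_of_adjacent hM haa' hua hua', ih ha'_lt hu' (by omega),
      decoratedCdet_comp_swap_of_adjacent hM haa' hua hua', neg_neg]

theorem decoratedCdet_eq_zero_of_le (hM : IsManin M) (hle : ∀ t, c t ≤ t) (hne : c ≠ id)
    (hu : ∀ t, c t = t → u t = 1) : decoratedCdet M c u = 0 := by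
  obtain ⟨j, hj, hmin⟩ := wellFounded_lt.has_min {t | c t ≠ t} (Function.ne_iff.1 hne)
  have hfix : ∀ t, t < j → c t = t := fun t ht => not_not.1 fun h => hmin t h ht
  have hvj : c j < j := lt_of_le_of_ne (hle j) hj
  set w : Fin n := ⟨j - 1, by omega⟩
  have hwj : (j : ℕ) = w + 1 := by simp only [w]; omega
  have hw : w < j := Fin.lt_def.2 (by omega)
  have hvw : c j ≤ w := Fin.le_def.2 (by simp only [w, Fin.lt_def] at hvj ⊢; omega)
  -- after moving column `c j` next to position `j`, two adjacent columns coincide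
  have hswapped : decoratedCdet M (c ∘ swap (c j) w) u = 0 := by
    refine decoratedCdet_eq_zero_of_adjacent hM hwj ?_ (hu w (hfix w hw))
    simp [swap_apply_of_ne_of_ne hvj.ne' hw.ne', hfix (c j) hvj]
  rcases hvw.eq_or_lt with heq | hlt
  · simpa [heq] using hswapped
  · have := decoratedCdet_comp_swap hM (c := c ∘ swap (c j) w) hlt
      fun t _ htw => hu t (hfix t (htw.trans_lt hw))
    rwa [Function.comp_assoc, ← Perm.coe_mul, swap_mul_self, Perm.coe_one, Function.comp_id,
      hswapped, neg_zero] at this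

theorem decoratedCdet_comp_perm (hM : IsManin M) (τ : Perm (Fin n)) (c : Fin n → Fin n) :
    decoratedCdet M (c ∘ τ) 1 = (sign τ : ℤ) • decoratedCdet M c 1 := by
  induction τ using swap_induction_on generalizing c with
  | one => simp
  | swap_mul τ x y hxy ih =>
    have hswap : ∀ c : Fin n → Fin n, decoratedCdet M (c ∘ swap x y) 1 = -decoratedCdet M c 1 := by
      intro c
      rcases hxy.lt_or_gt with h | h
      · exact decoratedCdet_comp_swap hM h fun _ _ _ => rfl
      · rw [Equiv.swap_comm]; exact decoratedCdet_comp_swap hM h fun _ _ _ => rfl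
    rw [Perm.coe_mul, ← Function.comp_assoc, ih, hswap, Perm.sign_mul, sign_swap hxy]
    simp

theorem IsManin.cdet_submatrix_id_perm (hM : IsManin M) (τ : Perm (Fin n)) : cdet (M.submatrix id τ) = (sign τ : ℤ) • cdet M := by
  simpa only [Function.id_comp, ← cdet_submatrix_id_eq_decoratedCdet, Matrix.submatrix_id_id]
    using decoratedCdet_comp_perm hM τ id

theorem cdet_submatrix_perm_id (M : Matrix (Fin n) (Fin n) R) (τ : Perm (Fin n)) :
    cdet (M.submatrix τ id) = (sign τ : ℤ) • cdet M := by
  rw [cdet, cdet, smul_sum]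
  refine Fintype.sum_equiv (Equiv.mulLeft τ) _ _ fun σ => ?_
  simp only [Matrix.submatrix_apply, Equiv.coe_mulLeft, Perm.mul_apply, Perm.sign_mul, smul_smul,
    id]
  rw [← Units.val_mul, ← mul_assoc, Int.units_mul_self, one_mul]

theorem IsManin.cdet_submatrix_equiv_self {m : ℕ} (hM : IsManin M) (e : Fin m ≃ Fin n) : cdet (M.submatrix e e) = cdet M := by
  obtain rfl : m = n := by simpa using Fintype.card_congr e
  have : M.submatrix e e = (M.submatrix e id).submatrix id e := rfl
  rw [this, (hM.submatrix e id).cdet_submatrix_id_perm, cdet_submatrix_perm_id, smul_smul,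
    ← Units.val_mul, Int.units_mul_self, Units.val_one, one_smul]

theorem decoratedCdet_eq_zero_of_apply_eq_zero {t : Fin n} (ht : u t = 0) :
    decoratedCdet M c u = 0 :=
  sum_eq_zero fun σ _ => by
    rw [List.prod_eq_zero (List.mem_ofFn.2 ⟨t, by simp [ht]⟩), smul_zero]

theorem cdet_mul_eq_sum_decoratedCdet (M U : Matrix (Fin n) (Fin n) R) :
    cdet (M * U) = ∑ c : Fin n → Fin n, decoratedCdet M c fun t => U (c t) t := by
  simp only [cdet, decoratedCdet, Matrix.mul_apply, List.prod_ofFn_sum, smul_sum]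
  exact sum_comm

theorem IsManin.cdet_mul_of_blockTriangular {U : Matrix (Fin n) (Fin n) R} (hM : IsManin M)
    (hU : U.BlockTriangular id) (hdiag : ∀ i, U i i = 1) : cdet (M * U) = cdet M := by
  rw [cdet_mul_eq_sum_decoratedCdet, sum_eq_single id]
  · simp [cdet, decoratedCdet, hdiag]
  · intro c _ hc
    by_cases hle : ∀ t, c t ≤ t
    · exact decoratedCdet_eq_zero_of_le hM hle hc fun t ht => by rw [ht, hdiag]
    · obtain ⟨t, ht⟩ := not_forall.1 hle
      exact decoratedCdet_eq_zero_of_apply_eq_zero (hU (not_le.1 ht))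
  · simp

theorem Matrix.cdet_fromBlocksFin {k l : ℕ} (A : Matrix (Fin k) (Fin k) R)
    (B : Matrix (Fin k) (Fin l) R) (C : Matrix (Fin l) (Fin k) R) (D : Matrix (Fin l) (Fin l) R) :
    cdet (fromBlocksFin A B C D) = ∑ π : Perm (Fin k ⊕ Fin l), (sign π : ℤ) •
      ((List.ofFn fun a => fromBlocks A B C D (π (.inl a)) (.inl a)).prod *
        (List.ofFn fun b => fromBlocks A B C D (π (.inr b)) (.inr b)).prod) := by
  refine Fintype.sum_equiv (finSumFinEquiv.symm.permCongr) _ _ fun σ => ?_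
  rw [sign_permCongr, List.ofFn_add, List.prod_append]
  simp only [show ∀ a : Fin k, Fin.castLE (Nat.le_add_right k l) a = Fin.castAdd l a from
    fun _ => rfl]
  simp [fromBlocksFin, permCongr_apply]

theorem Matrix.cdet_fromBlocksFin_zero₁₂ {k l : ℕ} (A : Matrix (Fin k) (Fin k) R)
    (C : Matrix (Fin l) (Fin k) R) (D : Matrix (Fin l) (Fin l) R) : cdet (fromBlocksFin A 0 C D) = cdet A * cdet D := by
  classical
  rw [cdet_fromBlocksFin, ← sum_subset (subset_univ (univ.image (sumCongrHom (Fin k) (Fin l)))),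
    sum_image fun p _ q _ h => sumCongrHom_injective h, Fintype.sum_prod_type, cdet, cdet,
    sum_mul_sum]
  · refine sum_congr rfl fun σ _ => sum_congr rfl fun τ _ => ?_
    rw [smul_mul_smul_comm]
    simp [sign_sumCongr]
  · intro π _ hπ
    -- a non-block-diagonal `π` sends some column of the second block to a row of the first
    obtain ⟨b, a, hba⟩ : ∃ b a, π (.inr b) = .inl a := by
      by_contra! h
      refine hπ (mem_image.2 ?_)
      have hinv : Set.MapsTo ⇑π⁻¹ (Set.range Sum.inl) (Set.range Sum.inl) := by
        rintro _ ⟨a, rfl⟩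
        rcases hx : π⁻¹ (.inl a) with a' | b
        · exact ⟨a', rfl⟩
        · exact absurd (by rw [← hx]; simp) (h b a)
      obtain ⟨p, hp⟩ := mem_sumCongrHom_range_of_perm_mapsTo_inl hinv
      exact ⟨p⁻¹, mem_univ _, by rw [map_inv, hp, inv_inv]⟩
    rw [List.prod_eq_zero (l := List.ofFn _) (List.mem_ofFn.2 ⟨b, by simp [hba]⟩), mul_zero,
      smul_zero]

end Cdet

theorem stmt7_general {A A' : Type*} [Ring A] [Ring A'] (f : A →+* A') (k l : ℕ)
    (Ablk : Matrix (Fin k) (Fin k) A) (B : Matrix (Fin k) (Fin l) A)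
    (C : Matrix (Fin l) (Fin k) A) (D : Matrix (Fin l) (Fin l) A)
    (hM : IsManin ((Matrix.fromBlocks Ablk B C D).submatrix
      finSumFinEquiv.symm finSumFinEquiv.symm))
    (Dinv : Matrix (Fin l) (Fin l) A') (hDinv : D.map f * Dinv = 1) :
    f (cdet ((Matrix.fromBlocks Ablk B C D).submatrix
        finSumFinEquiv.symm finSumFinEquiv.symm)) =
      cdet (D.map f) * cdet (Ablk.map f - B.map f * Dinv * C.map f) := by
  have hManin : IsManin ((Ablk.fromBlocksFin B C D).map f) := hM.map f
  have hswap : ((Ablk.fromBlocksFin B C D).map f).submatrix finAddFlip finAddFlip =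
      (D.map f).fromBlocksFin (C.map f) (B.map f) (Ablk.map f) := by
    rw [Matrix.fromBlocksFin_map, Matrix.fromBlocksFin_submatrix_finAddFlip]
  have hU := Matrix.blockTriangular_fromBlocksFin (-(Dinv * C.map f))
    Matrix.blockTriangular_one Matrix.blockTriangular_one
  calc f (cdet (Ablk.fromBlocksFin B C D))
      = cdet ((D.map f).fromBlocksFin (C.map f) (B.map f) (Ablk.map f)) := by
        rw [← cdet_map, ← hswap, hManin.cdet_submatrix_equiv_self]
    _ = cdet ((D.map f).fromBlocksFin (C.map f) (B.map f) (Ablk.map f) *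
          Matrix.fromBlocksFin 1 (-(Dinv * C.map f)) 0 1) :=
        ((hswap ▸ hManin.submatrix _ _).cdet_mul_of_blockTriangular hU
          (Matrix.fromBlocksFin_apply_self _ Matrix.one_apply_eq
            Matrix.one_apply_eq)).symm
    _ = cdet ((D.map f).fromBlocksFin 0 (B.map f) (Ablk.map f - B.map f * Dinv * C.map f)) := by
        rw [Matrix.fromBlocksFin_mul]
        congr 2 <;> simp [← Matrix.mul_assoc, hDinv, sub_eq_neg_add]
    _ = cdet (D.map f) * cdet (Ablk.map f - B.map f * Dinv * C.map f) :=
        Matrix.cdet_fromBlocksFin_zero₁₂ _ _ _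

/-- Schur complement formula for the column-ordered determinant of a Manin matrix,
when the bottom-right block has a right inverse in an overalgebra `A''` into which the
base algebra embeds. -/
theorem stmt7 {A A' : Type*} [Ring A] [Ring A'] (f : A →+* A')
    (hf : Function.Injective f) (k l : ℕ)
    (Ablk : Matrix (Fin k) (Fin k) A) (B : Matrix (Fin k) (Fin l) A)
    (C : Matrix (Fin l) (Fin k) A) (D : Matrix (Fin l) (Fin l) A)
    (hM : IsManin ((Matrix.fromBlocks Ablk B C D).submatrix
      finSumFinEquiv.symm finSumFinEquiv.symm))
    (Dinv : Matrix (Fin l) (Fin l) A') (hDinv : D.map f * Dinv = 1) :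
    f (cdet ((Matrix.fromBlocks Ablk B C D).submatrix
        finSumFinEquiv.symm finSumFinEquiv.symm)) =
      cdet (D.map f) * cdet (Ablk.map f - B.map f * Dinv * C.map f) :=
  stmt7_general f k l Ablk B C D hM Dinv hDinv
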